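/- For every p∈(0,1) and β>0 there is a sequence ε_N→0 (independent of g) such that for every N and every function g:Γ_N→[0,∞) not identically zero, p_{N,g} ≤ α/N + (1/N)·log( ∑_{m∈Γ_N} g(m)·exp(−N·I_N(m)) ) + ε_N/N, where α=β²(1−p)/(4p). -/
import Mathlib


open MeasureTheory Filter Finset
open scoped Classical ENNReal NNReal Topology

noncomputable section

namespace RDCW

/-- The real value of a Boolean spin. -/
def spin (b : Bool) : ℝ := if b then 1 else -1

/-- Spin configurations on `N` vertices. -/
abbrev Conf (N : ℕ) := Fin N → Bool

/-- Empirical magnetisation. -/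
def mag {N : ℕ} (σ : Conf N) : ℝ := (N : ℝ)⁻¹ * ∑ i, spin (σ i)

/-- The set `Γ_N` of attainable magnetisations. -/
def Gamma (N : ℕ) : Set ℝ := Set.range (fun σ : Conf N => mag σ)

/-- `Γ_N` as a finite set. -/
def GammaF (N : ℕ) : Finset ℝ :=
  Finset.image (fun σ : Conf N => mag σ) Finset.univ

/-- Configurations with magnetisation `m`, as a finset. -/
def level (N : ℕ) (m : ℝ) : Finset (Conf N) := Finset.univ.filter fun σ => mag σ = m

/-- Configurations with magnetisation `m`, as a set (`S_N[m]`). -/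
def SLev (N : ℕ) (m : ℝ) : Set (Conf N) := {σ | mag σ = m}

/-- The entropy `I_N(m) = -(1/N) log |S_N[m]|`
(for `m ∈ Γ_N` the cardinality is the binomial coefficient `C(N, (1+m)N/2)`). -/
def IN (N : ℕ) (m : ℝ) : ℝ := -(N : ℝ)⁻¹ * Real.log ((level N m).card)

/-- Two configurations differ by a single spin flip. -/
def Nbr {N : ℕ} (σ σ' : Conf N) : Prop :=
  (Finset.univ.filter fun i => σ i ≠ σ' i).card = 1

/-- The index set of the couplings: pairs `i < j`. -/
abbrev CIdx (N : ℕ) := {ij : Fin N × Fin N // ij.1 < ij.2}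

/-- A realisation of the random couplings. -/
abbrev Couplings (N : ℕ) := CIdx N → Bool

/-- Real value of a coupling. -/
def Jval {N : ℕ} (J : Couplings N) (e : CIdx N) : ℝ := if J e then 1 else 0

/-- The RDCW Hamiltonian. -/
def H (N : ℕ) (p h : ℝ) (J : Couplings N) (σ : Conf N) : ℝ :=
  -((N : ℝ) * p)⁻¹ * ∑ e : CIdx N, Jval J e * spin (σ e.1.1) * spin (σ e.1.2)
    - h * ∑ i, spin (σ i)

/-- The Curie--Weiss Hamiltonian. -/
def Hcw (N : ℕ) (h : ℝ) (σ : Conf N) : ℝ :=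
  -(N : ℝ)⁻¹ * ∑ e : CIdx N, spin (σ e.1.1) * spin (σ e.1.2) - h * ∑ i, spin (σ i)

/-- The centred random part `Δ` of the Hamiltonian. -/
def Delta (N : ℕ) (p : ℝ) (J : Couplings N) (σ : Conf N) : ℝ :=
  -((N : ℝ) * p)⁻¹ * ∑ e : CIdx N, (Jval J e - p) * spin (σ e.1.1) * spin (σ e.1.2)

/-- Partition function for a Hamiltonian. -/
def Z (N : ℕ) (β : ℝ) (Ham : Conf N → ℝ) : ℝ := ∑ σ : Conf N, Real.exp (-β * Ham σ)

/-- Gibbs measure for a Hamiltonian. -/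
def gibbs (N : ℕ) (β : ℝ) (Ham : Conf N → ℝ) (σ : Conf N) : ℝ :=
  Real.exp (-β * Ham σ) / Z N β Ham

/-- Off-diagonal Metropolis rates. -/
def flipP (N : ℕ) (β : ℝ) (Ham : Conf N → ℝ) (σ σ' : Conf N) : ℝ :=
  if Nbr σ σ' then (N : ℝ)⁻¹ * Real.exp (-β * max (Ham σ' - Ham σ) 0) else 0

/-- Metropolis (Glauber) transition probabilities. -/
def transP (N : ℕ) (β : ℝ) (Ham : Conf N → ℝ) (σ σ' : Conf N) : ℝ :=
  if σ' = σ then 1 - ∑ η ∈ Finset.univ.erase σ, flipP N β Ham σ η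
  else flipP N β Ham σ σ'

/-- Probability of a finite trajectory of a Markov chain with kernel `P`. -/
def pathProb {S : Type*} (P : S → S → ℝ) : S → List S → ℝ
  | _, [] => 1
  | x, y :: l => P x y * pathProb P y l

/-- `FirstHit A B l` says that the (time ≥ 1) trajectory `l` stays outside `A ∪ B`
until its final state, which belongs to `B`; this is the cylinder event
`{τ_B < τ_A, τ_B = l.length}`. -/
def FirstHit {S : Type*} (A B : Set S) : List S → Prop
  | [] => False
  | [x] => x ∈ B
  | x :: y :: l => x ∉ A ∧ x ∉ B ∧ FirstHit A B (y :: l)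

/-- `ℙ_σ(τ_B < τ_A)` for the chain with kernel `P`. -/
def hitProb {S : Type*} (P : S → S → ℝ) (σ : S) (A B : Set S) : ℝ :=
  ∑' l : List S, if FirstHit A B l then pathProb P σ l else 0

/-- `𝔼_σ[τ_B]` for the chain with kernel `P`. -/
def hitTimeExp {S : Type*} (P : S → S → ℝ) (σ : S) (B : Set S) : ℝ :=
  ∑' l : List S, if FirstHit (∅ : Set S) B l then (l.length : ℝ) * pathProb P σ l else 0

/-- The harmonic function `h_{A,B}`. -/
def harm {S : Type*} (P : S → S → ℝ) (A B : Set S) (σ : S) : ℝ :=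
  if σ ∈ A then 1 else if σ ∈ B then 0 else hitProb P σ B A

/-- Capacity via the Dirichlet principle. -/
def capac (N : ℕ) (β : ℝ) (Ham : Conf N → ℝ) (A B : Set (Conf N)) : ℝ :=
  sInf {x : ℝ | ∃ f : Conf N → ℝ, (∀ σ, 0 ≤ f σ ∧ f σ ≤ 1) ∧
    (∀ σ ∈ A, f σ = 1) ∧ (∀ σ ∈ B, f σ = 0) ∧
    x = ∑ σ : Conf N, ∑ σ' : Conf N,
      gibbs N β Ham σ * transP N β Ham σ σ' * (f σ - f σ') ^ 2}

/-- Bernoulli measure on `Bool`. -/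
def bern (p : ℝ) : Measure Bool :=
  p.toNNReal • Measure.dirac true + (1 - p).toNNReal • Measure.dirac false

instance (p : ℝ) : IsFiniteMeasure (bern p) := by unfold bern; infer_instance

/-- The joint law `ℙ_J` of the i.i.d. Bernoulli(p) couplings. -/
def PJ (N : ℕ) (p : ℝ) : Measure (Couplings N) := Measure.pi fun _ => bern p

/-- `E(m) = -m²/2 - hm`. -/
def Em (h m : ℝ) : ℝ := -m ^ 2 / 2 - h * m

/-- Transition probabilities of the Curie--Weiss magnetisation chain on `ℝ ⊇ Γ_N`. -/
def rCW (N : ℕ) (β h : ℝ) (m m' : ℝ) : ℝ :=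
  if m' = m + 2 / N then Real.exp (-β * N * max (Em h m' - Em h m) 0) * ((1 - m) / 2)
  else if m' = m - 2 / N then Real.exp (-β * N * max (Em h m' - Em h m) 0) * ((1 + m) / 2)
  else if m' = m then
    1 - Real.exp (-β * N * max (Em h (m + 2 / N) - Em h m) 0) * ((1 - m) / 2)
      - Real.exp (-β * N * max (Em h (m - 2 / N) - Em h m) 0) * ((1 + m) / 2)
  else 0

/-- The entropy `I(m)`. -/
def Ient (m : ℝ) : ℝ :=
  (1 - m) / 2 * Real.log ((1 - m) / 2) + (1 + m) / 2 * Real.log ((1 + m) / 2)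

/-- The Curie--Weiss free energy `f_β(m) = E(m) + β⁻¹ I(m)`. -/
def fE (β h m : ℝ) : ℝ := Em h m + β⁻¹ * Ient m

/-- The double-well structure of `f_β` in the metastable regime `β > 1`, `h > 0` small:
two local minima `m_- < 0 < m_+` and a local maximum `m* ∈ (m_-, m_+)`, all solving
`m = tanh(β(m+h))`, with `f_β(m_-) > f_β(m_+)`. -/
structure DoubleWell (β h mminus mstar mplus : ℝ) : Prop where
  lt_star : mminus < mstar
  star_lt : mstar < mplus
  neg : mminus < 0
  pos : 0 < mplus
  locmin_minus : IsLocalMin (fE β h) mminus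
  locmin_plus : IsLocalMin (fE β h) mplus
  locmax_star : IsLocalMax (fE β h) mstar
  fix_minus : mminus = Real.tanh (β * (mminus + h))
  fix_star : mstar = Real.tanh (β * (mstar + h))
  fix_plus : mplus = Real.tanh (β * (mplus + h))
  f_lt : fE β h mplus < fE β h mminus

/-- `y` is a point of `s` closest to `x`. -/
def ClosestIn (s : Set ℝ) (x y : ℝ) : Prop := y ∈ s ∧ ∀ z ∈ s, |x - y| ≤ |x - z|

/-- `α = β²(1-p)/(4p)`. -/
def alphaC (β p : ℝ) : ℝ := β ^ 2 * (1 - p) / (4 * p)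

/-- `κ = α + sup_{η∈(0,1)} [log η - β √(2α + log(c₁/(1-η)²)) / (p √(2c₂))]`. -/
def kappaC (β p c₁ c₂ : ℝ) : ℝ :=
  alphaC β p + sSup ((fun η : ℝ => Real.log η -
      β * Real.sqrt (2 * alphaC β p + Real.log (c₁ / (1 - η) ^ 2)) /
        (p * Real.sqrt (2 * c₂))) '' Set.Ioo (0 : ℝ) 1)

/-- Talagrand's concentration inequality with constants `c₁, c₂`: for every `M`, every
convex function `G` which is 1-Lipschitz w.r.t. the Euclidean norm, and independent
random variables `X₁, …, X_M` (jointly a product measure) bounded by `K`,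
`ℙ(|G(X) - 𝔼 G(X)| ≥ tK) ≤ c₁ e^{-c₂ t²}`. -/
def IsTalagrand (c₁ c₂ : ℝ) : Prop :=
  ∀ (M : ℕ) (G : (Fin M → ℝ) → ℝ),
    ConvexOn ℝ Set.univ G →
    (∀ x y : Fin M → ℝ, |G x - G y| ≤ Real.sqrt (∑ i, (x i - y i) ^ 2)) →
    ∀ (μ : Fin M → Measure ℝ) [∀ i, IsProbabilityMeasure (μ i)],
      ∀ K : ℝ, 0 < K → (∀ i, ∀ᵐ x ∂μ i, |x| ≤ K) →
        ∀ t : ℝ, 0 ≤ t →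
          (Measure.pi μ {x | t * K ≤ |G x - ∫ y, G y ∂Measure.pi μ|}).toReal ≤
            c₁ * Real.exp (-c₂ * t ^ 2)

/-- `𝒵_{N,g}` (with `e^{-βΔ}`). -/
def Zg (N : ℕ) (p β : ℝ) (g : ℝ → ℝ) (J : Couplings N) : ℝ :=
  ∑ m ∈ GammaF N, g m * ∑ σ ∈ level N m, Real.exp (-β * Delta N p J σ)

/-- The variant of `𝒵_{N,g}` with `e^{+βΔ}`. -/
def ZgPlus (N : ℕ) (p β : ℝ) (g : ℝ → ℝ) (J : Couplings N) : ℝ :=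
  ∑ m ∈ GammaF N, g m * ∑ σ ∈ level N m, Real.exp (β * Delta N p J σ)

/-- `F_{N,g} = (1/N) log 𝒵_{N,g}`. -/
def Fg (N : ℕ) (p β : ℝ) (g : ℝ → ℝ) (J : Couplings N) : ℝ :=
  (N : ℝ)⁻¹ * Real.log (Zg N p β g J)

/-- `p_{N,g} = 𝔼[F_{N,g}]`. -/
def pg (N : ℕ) (p β : ℝ) (g : ℝ → ℝ) : ℝ := ∫ J, Fg N p β g J ∂PJ N p

/-- `∑_{m∈Γ_N} g(m) e^{-N I_N(m)}`. -/
def entSum (N : ℕ) (g : ℝ → ℝ) : ℝ := ∑ m ∈ GammaF N, g m * Real.exp (-(N : ℝ) * IN N m)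

/-- Mesoscopic measure `Q_{β,N}(m)`. -/
def Qmeso (N : ℕ) (β : ℝ) (Ham : Conf N → ℝ) (m : ℝ) : ℝ :=
  ∑ σ ∈ level N m, gibbs N β Ham σ

/-- `𝔼_{ν_{A,B}}[τ_B]`, where `ν_{A,B}` is the last-exit biased distribution on `A`. -/
def lastExitMeanHit (N : ℕ) (β : ℝ) (Ham : Conf N → ℝ) (A B : Set (Conf N)) : ℝ :=
  (∑ σ ∈ Finset.univ.filter (· ∈ A),
      gibbs N β Ham σ * hitProb (transP N β Ham) σ A B * hitTimeExp (transP N β Ham) σ B) /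
  (∑ σ ∈ Finset.univ.filter (· ∈ A), gibbs N β Ham σ * hitProb (transP N β Ham) σ A B)

/-- The unit flow `φ_N` on the magnetisation space. -/
def phiFlow (N : ℕ) (m₁ m₂ m m' : ℝ) : ℝ :=
  if m' = m + 2 / N ∧ m₁ ≤ m ∧ m ≤ m₂ - 2 / N then
    ((1 - m) * N / 2 * Real.exp (-(N : ℝ) * IN N m))⁻¹
  else if m' = m - 2 / N ∧ m₁ + 2 / N ≤ m ∧ m ≤ m₂ then
    -((1 + m) * N / 2 * Real.exp (-(N : ℝ) * IN N m))⁻¹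
  else 0

/-- `U_δ = {m ∈ [-1,1] : f_β(m) ≤ f_β(m_-) + δ}`. -/
def Uset (β h mminus δ : ℝ) : Set ℝ :=
  {m | m ∈ Set.Icc (-1 : ℝ) 1 ∧ fE β h m ≤ fE β h mminus + δ}

/-- `U_δ(m_+)`: the connected component of `U_δ` containing `m_+`. -/
def Ucomp (β h mminus mplus δ : ℝ) : Set ℝ := connectedComponentIn (Uset β h mminus δ) mplus

/-- The function `ℓ_N`. -/
def ellN (β h mpN x : ℝ) : ℝ :=
  (1 / 2) * (x * (Real.log 2 + β * |2 - 2 * h| + 1)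
    - (1 - mpN + x) * Real.log (1 - mpN + x) + (1 - mpN) * Real.log (1 - mpN))

/-- Specification of `δ_N`. -/
def DeltaNSpec (β h mminus mplus δ : ℝ) (N : ℕ) (d : ℝ) : Prop :=
  IsGreatest {d' : ℝ | 0 < d' ∧ d' ≤ δ ∧
    ∃ m ∈ Ucomp β h mminus mplus δ ∩ Gamma N, m < mplus ∧ fE β h m = fE β h mminus + d'} d

/-- Specification of `m_{δ_N}`: the left endpoint of `U_{δ_N}(m_+) ∩ Γ_N`,
with `f_β(m_{δ_N}) = f_β(m_-) + δ_N`. -/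
def MdeltaSpec (β h mminus mplus dN : ℝ) (N : ℕ) (x : ℝ) : Prop :=
  IsLeast (Ucomp β h mminus mplus dN ∩ Gamma N) x ∧ fE β h x = fE β h mminus + dN

/-- Specification of `ε_N`. -/
def EpsNSpec (β h mminus mplus dN ε : ℝ) (N : ℕ) (e : ℝ) : Prop :=
  IsGreatest {e' : ℝ | 0 < e' ∧ e' ≤ ε ∧
    ∃ m ∈ Ucomp β h mminus mplus dN ∩ Gamma N, m < mplus ∧ fE β h m = fE β h mplus + e'} e

/-- Specification of `m_{ε_N}`. -/
def MepsSpec (β h mminus mplus dN eN : ℝ) (N : ℕ) (x : ℝ) : Prop :=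
  x ∈ Ucomp β h mminus mplus dN ∩ Gamma N ∧ x < mplus ∧ fE β h x = fE β h mplus + eN



/-! ### Auxiliary lemmas for `pg_upper` -/

lemma exp_le_quad {x : ℝ} (hx : |x| ≤ 1) :
    Real.exp x ≤ 1 + x + x ^ 2 / 2 + 2 / 9 * |x| ^ 3 := by
  have e1 := Real.exp_bound hx (n := 3) (by norm_num)
  have hs : ∑ m ∈ Finset.range 3, x ^ m / m.factorial = 1 + x + x ^ 2 / 2 := by
    rw [Finset.sum_range_succ, Finset.sum_range_succ, Finset.sum_range_succ,
      Finset.sum_range_zero]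
    norm_num [Nat.factorial]
  rw [hs] at e1
  norm_num [Nat.factorial] at e1
  have h3 : (0:ℝ) ≤ |x| ^ 3 := by positivity
  nlinarith [(abs_le.1 e1).2]

lemma key_ineq {p u : ℝ} (hp : 0 < p) (hp1 : p < 1) (hu : |u| ≤ 1) :
    p * Real.exp (u * (1 - p)) + (1 - p) * Real.exp (-(u * p)) ≤
      Real.exp (p * (1 - p) * u ^ 2 / 2 + 2 / 9 * |u| ^ 3) := by
  have hq : 0 < 1 - p := by linarith
  have h1 : |u * (1 - p)| ≤ 1 := by
    rw [abs_mul, abs_of_pos hq]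
    nlinarith [abs_nonneg u]
  have h2 : |-(u * p)| ≤ 1 := by
    rw [abs_neg, abs_mul, abs_of_pos hp]
    nlinarith [abs_nonneg u]
  have e1 := exp_le_quad h1
  have e2 := exp_le_quad h2
  have a1 : |u * (1 - p)| ^ 3 = |u| ^ 3 * (1 - p) ^ 3 := by
    rw [abs_mul, abs_of_pos hq]; ring
  have a2 : |-(u * p)| ^ 3 = |u| ^ 3 * p ^ 3 := by
    rw [abs_neg, abs_mul, abs_of_pos hp]; ring
  rw [a1] at e1; rw [a2] at e2
  have key : p * Real.exp (u * (1 - p)) + (1 - p) * Real.exp (-(u * p)) ≤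
      1 + (p * (1 - p) * u ^ 2 / 2 + 2 / 9 * |u| ^ 3) := by
    have hb : p * (1 - p) ^ 3 + (1 - p) * p ^ 3 ≤ 1 := by
      have hb1 : p * (1 - p) ≤ 1 / 4 := by nlinarith [sq_nonneg (2 * p - 1)]
      have hb2 : (1 - p) ^ 2 + p ^ 2 ≤ 1 := by nlinarith [mul_pos hp hq]
      have hb3 : p * (1 - p) ^ 3 + (1 - p) * p ^ 3 = (p * (1 - p)) * ((1 - p) ^ 2 + p ^ 2) := by
        ring
      rw [hb3]
      nlinarith [mul_pos hp hq]
    have h3 : (0:ℝ) ≤ |u| ^ 3 := by positivity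
    nlinarith [mul_le_mul_of_nonneg_left e1 hp.le, mul_le_mul_of_nonneg_left e2 hq.le]
  exact key.trans (by
    linarith [Real.add_one_le_exp (p * (1 - p) * u ^ 2 / 2 + 2 / 9 * |u| ^ 3)])

lemma integral_bern {p : ℝ} (hp : 0 ≤ p) (hp1 : p ≤ 1) (f : Bool → ℝ) :
    ∫ x, f x ∂bern p = p * f true + (1 - p) * f false := by
  unfold bern
  rw [integral_add_measure (Integrable.of_finite) (Integrable.of_finite)]
  rw [integral_smul_nnreal_measure, integral_smul_nnreal_measure, integral_dirac, integral_dirac]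
  rw [NNReal.smul_def, NNReal.smul_def, smul_eq_mul, smul_eq_mul,
    Real.coe_toNNReal _ hp, Real.coe_toNNReal _ (by linarith : (0:ℝ) ≤ 1 - p)]

lemma bern_prob {p : ℝ} (hp : 0 ≤ p) (hp1 : p ≤ 1) : IsProbabilityMeasure (bern p) := by
  constructor
  unfold bern
  simp only [Measure.add_apply, Measure.smul_apply, MeasureTheory.measure_univ]
  rw [ENNReal.smul_def, ENNReal.smul_def, smul_eq_mul, smul_eq_mul, mul_one, mul_one,
    ← ENNReal.coe_add, ← Real.toNNReal_add hp (by linarith : (0:ℝ) ≤ 1 - p)]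
  norm_num

lemma card_cidx (N : ℕ) : 2 * Fintype.card (CIdx N) ≤ N ^ 2 := by
  have h : Fintype.card (CIdx N ⊕ CIdx N) ≤ Fintype.card (Fin N × Fin N) := by
    apply Fintype.card_le_of_injective
      (fun x => Sum.elim (fun e : CIdx N => e.1) (fun e : CIdx N => e.1.swap) x)
    rintro (a | a) (b | b) hab
    · simp only [Sum.elim_inl] at hab; exact congrArg Sum.inl (Subtype.ext hab)
    · simp only [Sum.elim_inl, Sum.elim_inr] at hab
      exfalso
      have h1 := a.2
      have h2 := b.2
      rw [hab] at h1
      simp only [Prod.fst_swap, Prod.snd_swap] at h1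
      exact absurd (h1.trans h2) (lt_irrefl _)
    · simp only [Sum.elim_inl, Sum.elim_inr] at hab
      exfalso
      have h1 := a.2
      have h2 := b.2
      rw [← hab] at h2
      simp only [Prod.fst_swap, Prod.snd_swap] at h2
      exact absurd (h2.trans h1) (lt_irrefl _)
    · simp only [Sum.elim_inr] at hab
      exact congrArg Sum.inr (Subtype.ext (Prod.swap_injective hab))
  simpa [Fintype.card_sum, Fintype.card_prod, two_mul, sq] using h

lemma spin_pm {b : Bool} : spin b = 1 ∨ spin b = -1 := by
  cases b <;> simp [spin]

lemma abs_spin_mul {a b : Bool} : |spin a * spin b| = 1 := by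
  rcases spin_pm (b := a) with h1 | h1 <;> rcases spin_pm (b := b) with h2 | h2 <;>
    rw [h1, h2] <;> norm_num

set_option maxHeartbeats 4000000 in
lemma integral_exp_delta_le {N : ℕ} {p β : ℝ} (hp : 0 < p) (hp1 : p < 1) (hβ : 0 < β)
    (hN : 0 < N) (hβN : β ≤ N * p) (σ : Conf N) :
    ∫ J, Real.exp (-β * Delta N p J σ) ∂PJ N p ≤
      Real.exp (alphaC β p + β ^ 3 / (9 * N * p ^ 3)) := by
  classical
  have hNpos : (0:ℝ) < N := by exact_mod_cast hN
  set t : ℝ := β * ((N:ℝ) * p)⁻¹ with ht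
  have htpos : 0 < t := by positivity
  have ht1 : t ≤ 1 := by
    rw [ht]
    rw [mul_inv_le_iff₀ (by positivity)]
    linarith
  letI : MeasureSpace Bool := ⟨bern p⟩
  haveI : SigmaFinite (volume : Measure Bool) := by
    show SigmaFinite (bern p); infer_instance
  have hPJ : PJ N p = (volume : Measure (Couplings N)) := by
    rw [MeasureTheory.volume_pi]; rfl
  set F : CIdx N → Bool → ℝ := fun e x => Real.exp (t * ((if x then 1 else 0) - p)
    * spin (σ e.1.1) * spin (σ e.1.2)) with hF
  have hFval : ∀ (e : CIdx N) (x : Bool), F e x = Real.exp (t * ((if x then 1 else 0) - p)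
      * spin (σ e.1.1) * spin (σ e.1.2)) := fun e x => by rw [hF]
  have hdecomp : ∀ J : Couplings N, Real.exp (-β * Delta N p J σ) =
      ∏ e : CIdx N, F e (J e) := by
    intro J
    rw [← Real.exp_sum]
    · congr 1
      unfold Delta Jval
      rw [neg_mul, neg_mul, mul_neg, neg_neg, ← mul_assoc, Finset.mul_sum]
      apply Finset.sum_congr rfl
      intro e _
      rw [ht]
      ring
  have hintval : ∀ e : CIdx N, ∫ x : Bool, F e x =
      p * F e true + (1 - p) * F e false := by
    intro e
    rw [show (volume : Measure Bool) = bern p from rfl]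
    exact integral_bern hp.le hp1.le (F e)
  calc ∫ J, Real.exp (-β * Delta N p J σ) ∂PJ N p
      = ∫ J : Couplings N, ∏ e : CIdx N, F e (J e) := by
        rw [hPJ]
        exact integral_congr_ae (Filter.Eventually.of_forall hdecomp)
    _ = ∏ e : CIdx N, ∫ x : Bool, F e x :=
        MeasureTheory.integral_fintype_prod_eq_prod (ι := CIdx N) (f := F)
    _ ≤ ∏ e : CIdx N, Real.exp (p * (1 - p) * t ^ 2 / 2 + 2 / 9 * t ^ 3) := by
        apply Finset.prod_le_prod
        · intro e _
          rw [hintval e, hFval, hFval]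
          have hq : (0:ℝ) < 1 - p := by linarith
          positivity
        · intro e _
          have habs : |spin (σ e.1.1) * spin (σ e.1.2)| = 1 := abs_spin_mul
          set s : ℝ := spin (σ e.1.1) * spin (σ e.1.2) with hs
          have hint : ∫ x : Bool, F e x =
              p * Real.exp ((t * s) * (1 - p)) + (1 - p) * Real.exp (-((t * s) * p)) := by
            rw [hintval e, hFval, hFval]
            norm_num
            rw [hs]
            ring_nf
          rw [hint]
          have hu1 : |t * s| ≤ 1 := by
            rw [abs_mul, habs, mul_one, abs_of_pos htpos]; exact ht1
          refine (key_ineq hp hp1 hu1).trans (le_of_eq ?_)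
          congr 1
          have h2 : (t * s) ^ 2 = t ^ 2 := by
            have : s ^ 2 = 1 := by
              have := sq_abs s
              rw [habs] at this
              nlinarith
            nlinarith [this]
          have h3 : |t * s| ^ 3 = t ^ 3 := by
            rw [abs_mul, habs, mul_one, abs_of_pos htpos]
          rw [h2, h3]
    _ = Real.exp ((Fintype.card (CIdx N) : ℝ)
          * (p * (1 - p) * t ^ 2 / 2 + 2 / 9 * t ^ 3)) := by
        rw [Finset.prod_const, Finset.card_univ, ← Real.exp_nat_mul]
    _ ≤ Real.exp (alphaC β p + β ^ 3 / (9 * N * p ^ 3)) := by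
        apply Real.exp_le_exp.mpr
        have h2M : (2:ℝ) * (Fintype.card (CIdx N) : ℝ) ≤ (N:ℝ) ^ 2 := by
          exact_mod_cast card_cidx N
        have hX : 0 ≤ p * (1 - p) * t ^ 2 / 2 + 2 / 9 * t ^ 3 := by
          have : 0 < 1 - p := by linarith
          positivity
        have step : (Fintype.card (CIdx N) : ℝ)
            * (p * (1 - p) * t ^ 2 / 2 + 2 / 9 * t ^ 3)
            ≤ (N:ℝ) ^ 2 / 2 * (p * (1 - p) * t ^ 2 / 2 + 2 / 9 * t ^ 3) :=
          mul_le_mul_of_nonneg_right (by linarith) hX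
        refine step.trans (le_of_eq ?_)
        unfold alphaC
        rw [ht]
        field_simp
        ring

lemma abs_spin (b : Bool) : |spin b| = 1 := by cases b <;> simp [spin]

lemma level_card_pos {N : ℕ} {m : ℝ} (hm : m ∈ GammaF N) : 0 < (level N m).card := by
  obtain ⟨σ, -, hσ⟩ := Finset.mem_image.mp hm
  exact Finset.card_pos.mpr ⟨σ, by simp [level, hσ]⟩

lemma exp_neg_IN {N : ℕ} (hN : 0 < N) {m : ℝ} (hm : m ∈ GammaF N) :
    Real.exp (-(N : ℝ) * IN N m) = ((level N m).card : ℝ) := by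
  have hNne : (N : ℝ) ≠ 0 := Nat.cast_ne_zero.mpr hN.ne'
  have hcard : (0 : ℝ) < (level N m).card := by
    exact_mod_cast level_card_pos hm
  unfold IN
  rw [show -(N : ℝ) * (-(N : ℝ)⁻¹ * Real.log ((level N m).card)) =
    ((N : ℝ) * (N : ℝ)⁻¹) * Real.log ((level N m).card) by ring,
    mul_inv_cancel₀ hNne, one_mul, Real.exp_log hcard]

lemma entSum_pos {N : ℕ} {g : ℝ → ℝ} (hg : ∀ m ∈ GammaF N, 0 ≤ g m)
    (hex : ∃ m ∈ GammaF N, g m ≠ 0) : 0 < entSum N g := by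
  obtain ⟨m₀, hm₀, hgm₀⟩ := hex
  unfold entSum
  exact Finset.sum_pos' (fun m hm => mul_nonneg (hg m hm) (Real.exp_nonneg _))
    ⟨m₀, hm₀, mul_pos ((hg m₀ hm₀).lt_of_ne (Ne.symm hgm₀)) (Real.exp_pos _)⟩

lemma Zg_pos {N : ℕ} {p β : ℝ} {g : ℝ → ℝ} (hg : ∀ m ∈ GammaF N, 0 ≤ g m)
    (hex : ∃ m ∈ GammaF N, g m ≠ 0) (J : Couplings N) : 0 < Zg N p β g J := by
  obtain ⟨m₀, hm₀, hgm₀⟩ := hex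
  unfold Zg
  refine Finset.sum_pos'
    (fun m hm => mul_nonneg (hg m hm) (Finset.sum_nonneg fun σ _ => (Real.exp_pos _).le))
    ⟨m₀, hm₀, mul_pos ((hg m₀ hm₀).lt_of_ne (Ne.symm hgm₀)) ?_⟩
  obtain ⟨σ, hσ⟩ := Finset.card_pos.mp (level_card_pos hm₀)
  exact Finset.sum_pos' (fun σ _ => (Real.exp_pos _).le) ⟨σ, hσ, Real.exp_pos _⟩

lemma neg_delta_le {N : ℕ} {p β : ℝ} (hp : 0 < p) (hp1 : p < 1) (hβ : 0 < β)
    (hN : 0 < N) (J : Couplings N) (σ : Conf N) :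
    -β * Delta N p J σ ≤ β * N / (2 * p) := by
  have hNR : (0 : ℝ) < N := by exact_mod_cast hN
  have hsum : |∑ e : CIdx N, (Jval J e - p) * spin (σ e.1.1) * spin (σ e.1.2)|
      ≤ (Fintype.card (CIdx N) : ℝ) := by
    calc |∑ e : CIdx N, (Jval J e - p) * spin (σ e.1.1) * spin (σ e.1.2)|
        ≤ ∑ e : CIdx N, |(Jval J e - p) * spin (σ e.1.1) * spin (σ e.1.2)| :=
          Finset.abs_sum_le_sum_abs _ _
      _ ≤ ∑ _e : CIdx N, (1 : ℝ) := by
          apply Finset.sum_le_sum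
          intro e _
          rw [abs_mul, abs_mul, abs_spin, abs_spin, mul_one, mul_one]
          have : |Jval J e - p| ≤ 1 := by
            unfold Jval
            rcases Bool.eq_false_or_eq_true (J e) with h | h <;> rw [h] <;>
              rw [abs_le] <;> norm_num <;> constructor <;> linarith
          exact this
      _ = (Fintype.card (CIdx N) : ℝ) := by
          rw [Finset.sum_const, Finset.card_univ, nsmul_eq_mul, mul_one]
  have hDabs : |Delta N p J σ| ≤ (N : ℝ) / (2 * p) := by
    unfold Delta
    rw [abs_mul, abs_neg, abs_inv, abs_of_pos (by positivity : (0:ℝ) < (N:ℝ) * p)]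
    have h2M : (2 : ℝ) * (Fintype.card (CIdx N) : ℝ) ≤ (N : ℝ) ^ 2 := by
      exact_mod_cast card_cidx N
    calc ((N : ℝ) * p)⁻¹ * |∑ e : CIdx N, (Jval J e - p) * spin (σ e.1.1) * spin (σ e.1.2)|
        ≤ ((N : ℝ) * p)⁻¹ * ((N : ℝ) ^ 2 / 2) := by
          apply mul_le_mul_of_nonneg_left _ (by positivity)
          exact hsum.trans (by linarith)
      _ = (N : ℝ) / (2 * p) := by field_simp
  calc -β * Delta N p J σ ≤ |(-β) * Delta N p J σ| := le_abs_self _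
    _ = β * |Delta N p J σ| := by rw [abs_mul, abs_neg, abs_of_pos hβ]
    _ ≤ β * ((N : ℝ) / (2 * p)) := mul_le_mul_of_nonneg_left hDabs hβ.le
    _ = β * N / (2 * p) := by ring

/-- The error sequence used in `pg_upper`. -/
def epsSeq (p β : ℝ) : ℕ → ℝ := fun N =>
  if β ≤ (N : ℝ) * p then β ^ 3 / (9 * (N : ℝ) * p ^ 3) else β * (N : ℝ) / (2 * p)

/-- upper bound on `p_{N,g}`. -/
theorem pg_upper (p β : ℝ) (hp : 0 < p) (hp1 : p < 1) (hβ : 0 < β) :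
    ∃ ε : ℕ → ℝ, Tendsto ε atTop (𝓝 0) ∧
    ∀ (N : ℕ) (g : ℝ → ℝ), (∀ m ∈ GammaF N, 0 ≤ g m) → (∃ m ∈ GammaF N, g m ≠ 0) →
      pg N p β g ≤ alphaC β p / N + (N : ℝ)⁻¹ * Real.log (entSum N g) + ε N / N := by
  classical
  refine ⟨epsSeq p β, ?_, ?_⟩
  · -- convergence of the error sequence
    have heq : (fun N : ℕ => β ^ 3 / (9 * (N : ℝ) * p ^ 3)) =ᶠ[atTop] epsSeq p β := by
      filter_upwards [eventually_ge_atTop ⌈β / p⌉₊] with N hN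
      have hb : β ≤ (N : ℝ) * p := by
        have h1 : β / p ≤ (⌈β / p⌉₊ : ℝ) := Nat.le_ceil _
        have h2 : ((⌈β / p⌉₊ : ℕ) : ℝ) ≤ (N : ℝ) := by exact_mod_cast hN
        rw [div_le_iff₀ hp] at h1
        nlinarith
      unfold epsSeq
      rw [if_pos hb]
    refine Tendsto.congr' heq ?_
    have h1 : (fun N : ℕ => β ^ 3 / (9 * (N : ℝ) * p ^ 3)) =
        fun N : ℕ => (β ^ 3 / (9 * p ^ 3)) * ((N : ℝ))⁻¹ := by
      funext N
      rw [div_eq_mul_inv, div_eq_mul_inv,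
        show (9 * (N : ℝ) * p ^ 3) = (9 * p ^ 3) * (N : ℝ) by ring, mul_inv]
      ring
    rw [h1]
    simpa using
      (tendsto_inv_atTop_zero.comp (tendsto_natCast_atTop_atTop (R := ℝ))).const_mul
        (β ^ 3 / (9 * p ^ 3))
  · intro N g hg hex
    rcases Nat.eq_zero_or_pos N with h0 | hN
    · subst h0
      have : pg 0 p β g = 0 := by
        unfold pg Fg
        norm_num
      rw [this]
      norm_num
    -- main case `N ≥ 1`
    have hNR : (0 : ℝ) < N := by exact_mod_cast hN
    haveI : IsProbabilityMeasure (bern p) := bern_prob hp.le hp1.le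
    haveI hPJfin : IsFiniteMeasure (PJ N p) := by unfold PJ; infer_instance
    haveI hPJprob : IsProbabilityMeasure (PJ N p) := by unfold PJ; infer_instance
    have hents : 0 < entSum N g := entSum_pos hg hex
    set E : ℝ := alphaC β p + epsSeq p β N with hE
    set c : ℝ := Real.exp E * entSum N g with hc
    have hcpos : 0 < c := by rw [hc]; positivity
    have hα : 0 ≤ alphaC β p := by
      unfold alphaC
      have : (0:ℝ) ≤ 1 - p := by linarith
      positivity
    have hcard_sum : entSum N g = ∑ m ∈ GammaF N, g m * ((level N m).card : ℝ) :=
      Finset.sum_congr rfl fun m hm => by rw [exp_neg_IN hN hm]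
    -- the expectation of `Zg` is at most `c`
    have hZint : ∫ J, Zg N p β g J ∂PJ N p ≤ c := by
      by_cases hb : β ≤ (N : ℝ) * p
      · have hEeq : E = alphaC β p + β ^ 3 / (9 * (N : ℝ) * p ^ 3) := by
          rw [hE]; unfold epsSeq; rw [if_pos hb]
        have step1 : ∫ J, Zg N p β g J ∂PJ N p
            = ∑ m ∈ GammaF N, g m *
                ∑ σ ∈ level N m, ∫ J, Real.exp (-β * Delta N p J σ) ∂PJ N p := by
          unfold Zg
          rw [integral_finset_sum _ (fun m _ => Integrable.of_finite)]
          refine Finset.sum_congr rfl fun m hm => ?_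
          rw [MeasureTheory.integral_const_mul]
          congr 1
          exact integral_finset_sum _ (fun σ _ => Integrable.of_finite)
        rw [step1, hc, hEeq, hcard_sum, Finset.mul_sum]
        apply Finset.sum_le_sum
        intro m hm
        have hsum : ∑ σ ∈ level N m, ∫ J, Real.exp (-β * Delta N p J σ) ∂PJ N p
            ≤ (level N m).card •
              Real.exp (alphaC β p + β ^ 3 / (9 * (N : ℝ) * p ^ 3)) :=
          Finset.sum_le_card_nsmul _ _ _
            (fun σ _ => integral_exp_delta_le hp hp1 hβ hN hb σ)
        rw [nsmul_eq_mul] at hsum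
        calc g m * ∑ σ ∈ level N m, ∫ J, Real.exp (-β * Delta N p J σ) ∂PJ N p
            ≤ g m * (((level N m).card : ℝ) *
              Real.exp (alphaC β p + β ^ 3 / (9 * (N : ℝ) * p ^ 3))) :=
              mul_le_mul_of_nonneg_left hsum (hg m hm)
          _ = Real.exp (alphaC β p + β ^ 3 / (9 * (N : ℝ) * p ^ 3)) *
              (g m * ((level N m).card : ℝ)) := by ring
      · have hEeq : E = alphaC β p + β * (N : ℝ) / (2 * p) := by
          rw [hE]; unfold epsSeq; rw [if_neg hb]
        have hpt : ∀ J : Couplings N, Zg N p β g J ≤ c := by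
          intro J
          unfold Zg
          calc ∑ m ∈ GammaF N, g m * ∑ σ ∈ level N m, Real.exp (-β * Delta N p J σ)
              ≤ ∑ m ∈ GammaF N, g m *
                  (((level N m).card : ℝ) * Real.exp (β * (N : ℝ) / (2 * p))) := by
                apply Finset.sum_le_sum
                intro m hm
                refine mul_le_mul_of_nonneg_left ?_ (hg m hm)
                have := Finset.sum_le_card_nsmul (level N m)
                  (fun σ => Real.exp (-β * Delta N p J σ))
                  (Real.exp (β * (N : ℝ) / (2 * p)))
                  (fun σ _ => Real.exp_le_exp.mpr (neg_delta_le hp hp1 hβ hN J σ))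
                rwa [nsmul_eq_mul] at this
            _ = Real.exp (β * (N : ℝ) / (2 * p)) * entSum N g := by
                rw [hcard_sum, Finset.mul_sum]
                exact Finset.sum_congr rfl fun m hm => by ring
            _ ≤ c := by
                rw [hc]
                refine mul_le_mul_of_nonneg_right (Real.exp_le_exp.mpr ?_) hents.le
                rw [hEeq]
                linarith
        calc ∫ J, Zg N p β g J ∂PJ N p ≤ ∫ _J, c ∂PJ N p :=
              integral_mono Integrable.of_finite Integrable.of_finite hpt
          _ = c := by rw [integral_const]; simp
    -- Jensen-type bound
    have hlog : ∫ J, Real.log (Zg N p β g J) ∂PJ N p ≤ Real.log c := by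
      have hpt : ∀ J : Couplings N,
          Real.log (Zg N p β g J) ≤ Zg N p β g J / c - 1 + Real.log c := by
        intro J
        have hZp := Zg_pos (p := p) (β := β) hg hex J
        have h1 : Real.log (Zg N p β g J / c) ≤ Zg N p β g J / c - 1 :=
          Real.log_le_sub_one_of_pos (by positivity)
        rw [Real.log_div hZp.ne' hcpos.ne'] at h1
        linarith
      calc ∫ J, Real.log (Zg N p β g J) ∂PJ N p
          ≤ ∫ J, (Zg N p β g J / c - 1 + Real.log c) ∂PJ N p :=
            integral_mono Integrable.of_finite Integrable.of_finite hpt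
        _ = (∫ J, Zg N p β g J ∂PJ N p) / c - 1 + Real.log c := by
            rw [integral_add Integrable.of_finite (integrable_const _),
              integral_sub Integrable.of_finite (integrable_const _),
              integral_div, integral_const, integral_const]
            simp
        _ ≤ Real.log c := by
            have h2 : (∫ J, Zg N p β g J ∂PJ N p) / c ≤ 1 :=
              (div_le_one hcpos).mpr hZint
            linarith
    -- conclusion
    have hpg : pg N p β g = (N : ℝ)⁻¹ * ∫ J, Real.log (Zg N p β g J) ∂PJ N p := by
      unfold pg Fg
      exact MeasureTheory.integral_const_mul _ _
    have hlogc : Real.log c = E + Real.log (entSum N g) := by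
      rw [hc, Real.log_mul (Real.exp_ne_zero _) hents.ne', Real.log_exp]
    rw [hpg]
    calc (N : ℝ)⁻¹ * ∫ J, Real.log (Zg N p β g J) ∂PJ N p
        ≤ (N : ℝ)⁻¹ * (E + Real.log (entSum N g)) :=
          mul_le_mul_of_nonneg_left (hlog.trans_eq hlogc) (inv_nonneg.mpr hNR.le)
      _ = alphaC β p / N + (N : ℝ)⁻¹ * Real.log (entSum N g) + epsSeq p β N / N := by
          rw [hE, div_eq_inv_mul, div_eq_inv_mul]
          ring


end RDCW
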